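/- Let s_1, s_2, s_3 ∈ ℂ with Re s_1 > 3, Re s_2 > 3, Re s_3 > 3, and write Z(a,b,c) = ∑_{m≥1}∑_{n≥1} m^{−a} n^{−b} (m+n)^{−c}. Then (s_3(s_3+1) − 2s_1 s_3 − 2s_2 s_3 + 2s_1 s_2)·Z(s_1,s_2,s_3) + s_3(s_1+2s_2−2s_3−2)·Z(s_1−1,s_2,s_3+1) + s_3(2s_1+s_2−2s_3−2)·Z(s_1,s_2−1,s_3+1) + s_1 s_3·Z(s_1+1,s_2−2,s_3+1) + s_2 s_3·Z(s_1−2,s_2+1,s_3+1) + s_1(s_2−2s_3)·Z(s_1+1,s_2−1,s_3) + s_2(s_1−2s_3)·Z(s_1−1,s_2+1,s_3) − s_1(2s_2−s_3)·Z(s_1+1,s_2,s_3−1) − s_2(2s_1−s_3)·Z(s_1,s_2+1,s_3−1) + s_3(s_3+1)·Z(s_1−2,s_2,s_3+2) + s_3(s_3+1)·Z(s_1,s_2−2,s_3+2) + s_1 s_2·Z(s_1+1,s_2+1,s_3−2) + 2s_3(s_3+1)·Z(s_1−1,s_2−1,s_3+2) = 0. (Identity (4.6) for the Mordell–Tornheim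 double zeta-function, arising from the coefficient of ab in the generating function of Example 4.2.) -/

import Mathlib

/-!
The identity holds summand by summand. Writing every summand of the thirteen series as
`x ^ (-(s₁ + 1)) * y ^ (-(s₂ + 1)) * (x + y) ^ (-(s₃ + 2))` times a monomial in `x` and `y`,
the combination becomes that common factor times a polynomial in `x, y` which vanishes
identically. All thirteen series converge absolutely for `Re sⱼ > 3`, so the termwise relation
passes to the sums.
-/

open Complex

/-- The Mordell–Tornheim double zeta-function
`ζ_{MT,2}(a,b,c) = ∑_{m,n ≥ 1} m^{-a} n^{-b} (m+n)^{-c}`. -/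
noncomputable def mordellTornheim2 (a b c : ℂ) : ℂ :=
  ∑' p : ℕ × ℕ,
    ((p.1 : ℂ) + 1) ^ (-a) * ((p.2 : ℂ) + 1) ^ (-b) *
      ((p.1 : ℂ) + (p.2 : ℂ) + 2) ^ (-c)

noncomputable def mordellTornheimTerm (a b c x y : ℂ) : ℂ :=
  x ^ (-a) * y ^ (-b) * (x + y) ^ (-c)

lemma cpow_neg_eq_mul_pow_of_eq_sub {z s t : ℂ} {n : ℕ} (hz : z ≠ 0) (h : t = s - n) :
    z ^ (-t) = z ^ (-s) * z ^ n := by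
  rw [h, neg_sub, sub_eq_neg_add, cpow_add _ _ hz, cpow_natCast]

theorem mordellTornheimTerm_identity_ab (s₁ s₂ s₃ x y : ℂ) (hx : x ≠ 0) (hy : y ≠ 0)
    (hxy : x + y ≠ 0) :
    (s₃ * (s₃ + 1) - 2 * s₁ * s₃ - 2 * s₂ * s₃ + 2 * s₁ * s₂) *
        mordellTornheimTerm s₁ s₂ s₃ x y
      + s₃ * (s₁ + 2 * s₂ - 2 * s₃ - 2) * mordellTornheimTerm (s₁ - 1) s₂ (s₃ + 1) x y
      + s₃ * (2 * s₁ + s₂ - 2 * s₃ - 2) * mordellTornheimTerm s₁ (s₂ - 1) (s₃ + 1) x y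
      + s₁ * s₃ * mordellTornheimTerm (s₁ + 1) (s₂ - 2) (s₃ + 1) x y
      + s₂ * s₃ * mordellTornheimTerm (s₁ - 2) (s₂ + 1) (s₃ + 1) x y
      + s₁ * (s₂ - 2 * s₃) * mordellTornheimTerm (s₁ + 1) (s₂ - 1) s₃ x y
      + s₂ * (s₁ - 2 * s₃) * mordellTornheimTerm (s₁ - 1) (s₂ + 1) s₃ x y
      - s₁ * (2 * s₂ - s₃) * mordellTornheimTerm (s₁ + 1) s₂ (s₃ - 1) x y
      - s₂ * (2 * s₁ - s₃) * mordellTornheimTerm s₁ (s₂ + 1) (s₃ - 1) x y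
      + s₃ * (s₃ + 1) * mordellTornheimTerm (s₁ - 2) s₂ (s₃ + 2) x y
      + s₃ * (s₃ + 1) * mordellTornheimTerm s₁ (s₂ - 2) (s₃ + 2) x y
      + s₁ * s₂ * mordellTornheimTerm (s₁ + 1) (s₂ + 1) (s₃ - 2) x y
      + 2 * s₃ * (s₃ + 1) * mordellTornheimTerm (s₁ - 1) (s₂ - 1) (s₃ + 2) x y = 0 := by
  have shift {z : ℂ} (hz : z ≠ 0) (s t : ℂ) (n : ℕ) (h : t = s - n) :=
    cpow_neg_eq_mul_pow_of_eq_sub hz h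
  simp only [mordellTornheimTerm,
    shift hx (s₁ + 1) s₁ 1 (by push_cast; ring),
    shift hx (s₁ + 1) (s₁ - 1) 2 (by push_cast; ring),
    shift hx (s₁ + 1) (s₁ - 2) 3 (by push_cast; ring),
    shift hy (s₂ + 1) s₂ 1 (by push_cast; ring),
    shift hy (s₂ + 1) (s₂ - 1) 2 (by push_cast; ring),
    shift hy (s₂ + 1) (s₂ - 2) 3 (by push_cast; ring),
    shift hxy (s₃ + 2) (s₃ + 1) 1 (by push_cast; ring),
    shift hxy (s₃ + 2) s₃ 2 (by push_cast; ring),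
    shift hxy (s₃ + 2) (s₃ - 1) 3 (by push_cast; ring),
    shift hxy (s₃ + 2) (s₃ - 2) 4 (by push_cast; ring)]
  ring

lemma norm_natCast_add_one_cpow (n : ℕ) (s : ℂ) :
    ‖((n : ℂ) + 1) ^ s‖ = ((n : ℝ) + 1) ^ s.re := by
  exact_mod_cast norm_natCast_cpow_of_pos n.succ_pos s

lemma summable_norm_natCast_add_one_cpow_neg {a : ℂ} (ha : 1 < a.re) :
    Summable fun n : ℕ => ‖((n : ℂ) + 1) ^ (-a)‖ := by
  have h := (Real.summable_one_div_nat_add_rpow 1 a.re).mpr ha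
  refine h.congr fun n => ?_
  rw [norm_natCast_add_one_cpow, neg_re, Real.rpow_neg (by positivity),
    abs_of_pos (by positivity), one_div]

lemma norm_natCast_add_one_cpow_neg_le_one (n : ℕ) {c : ℂ} (hc : 0 ≤ c.re) :
    ‖((n : ℂ) + 1) ^ (-c)‖ ≤ 1 := by
  rw [norm_natCast_add_one_cpow, neg_re]
  exact Real.rpow_le_one_of_one_le_of_nonpos (by simp) (neg_nonpos.mpr hc)

theorem summable_mordellTornheimTerm {a b c : ℂ} (ha : 1 < a.re) (hb : 1 < b.re)
    (hc : 0 ≤ c.re) :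
    Summable fun p : ℕ × ℕ => mordellTornheimTerm a b c (p.1 + 1) (p.2 + 1) := by
  refine .of_norm_bounded ((summable_norm_natCast_add_one_cpow_neg ha).mul_norm
    (summable_norm_natCast_add_one_cpow_neg hb)) fun p => ?_
  have hsum : (p.1 : ℂ) + 1 + ((p.2 : ℂ) + 1) = ((p.1 + p.2 + 1 : ℕ) : ℂ) + 1 := by
    push_cast; ring
  rw [mordellTornheimTerm, norm_mul _ ((_ : ℂ) ^ (-c)), hsum]
  exact mul_le_of_le_one_right (norm_nonneg _) (norm_natCast_add_one_cpow_neg_le_one _ hc)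

theorem hasSum_mordellTornheim2 {a b c : ℂ} (ha : 1 < a.re) (hb : 1 < b.re) (hc : 0 ≤ c.re) :
    HasSum (fun p : ℕ × ℕ => mordellTornheimTerm a b c (p.1 + 1) (p.2 + 1))
      (mordellTornheim2 a b c) := by
  convert (summable_mordellTornheimTerm ha hb hc).hasSum using 1
  refine tsum_congr fun p => ?_
  rw [mordellTornheimTerm, add_add_add_comm, one_add_one_eq_two]

/-- Identity (4.6) for the Mordell–Tornheim double zeta-function (coefficient
of `ab` in the generating function of Example 4.2). -/
theorem mordellTornheim2_identity_ab (s₁ s₂ s₃ : ℂ)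
    (h₁ : 3 < s₁.re) (h₂ : 3 < s₂.re) (h₃ : 3 < s₃.re) :
    (s₃ * (s₃ + 1) - 2 * s₁ * s₃ - 2 * s₂ * s₃ + 2 * s₁ * s₂) *
        mordellTornheim2 s₁ s₂ s₃
      + s₃ * (s₁ + 2 * s₂ - 2 * s₃ - 2) * mordellTornheim2 (s₁ - 1) s₂ (s₃ + 1)
      + s₃ * (2 * s₁ + s₂ - 2 * s₃ - 2) * mordellTornheim2 s₁ (s₂ - 1) (s₃ + 1)
      + s₁ * s₃ * mordellTornheim2 (s₁ + 1) (s₂ - 2) (s₃ + 1)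
      + s₂ * s₃ * mordellTornheim2 (s₁ - 2) (s₂ + 1) (s₃ + 1)
      + s₁ * (s₂ - 2 * s₃) * mordellTornheim2 (s₁ + 1) (s₂ - 1) s₃
      + s₂ * (s₁ - 2 * s₃) * mordellTornheim2 (s₁ - 1) (s₂ + 1) s₃
      - s₁ * (2 * s₂ - s₃) * mordellTornheim2 (s₁ + 1) s₂ (s₃ - 1)
      - s₂ * (2 * s₁ - s₃) * mordellTornheim2 s₁ (s₂ + 1) (s₃ - 1)
      + s₃ * (s₃ + 1) * mordellTornheim2 (s₁ - 2) s₂ (s₃ + 2)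
      + s₃ * (s₃ + 1) * mordellTornheim2 s₁ (s₂ - 2) (s₃ + 2)
      + s₁ * s₂ * mordellTornheim2 (s₁ + 1) (s₂ + 1) (s₃ - 2)
      + 2 * s₃ * (s₃ + 1) * mordellTornheim2 (s₁ - 1) (s₂ - 1) (s₃ + 2) = 0 := by
  have hx (m : ℕ) : (m : ℂ) + 1 ≠ 0 := by exact_mod_cast m.succ_ne_zero
  have hxy (m n : ℕ) : (m : ℂ) + 1 + ((n : ℂ) + 1) ≠ 0 := by
    exact_mod_cast (m + n + 1).succ_ne_zero
  refine HasSum.unique ?_ <| (hasSum_zero (L := .unconditional _)).congr_fun fun p : ℕ × ℕ =>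
    mordellTornheimTerm_identity_ab s₁ s₂ s₃ _ _ (hx p.1) (hx p.2) (hxy p.1 p.2)
  iterate 12 first | refine HasSum.add ?_ ?_ | refine HasSum.sub ?_ ?_
  all_goals refine (hasSum_mordellTornheim2 ?_ ?_ ?_).mul_left _
  all_goals (norm_num; linarith)
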